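/- Let A be an n×n real matrix, and for i = 1,…,m let B_i ∈ ℝ^{n×1}, C_i ∈ ℝ^{1×n}, and σ_i ≥ 0. Suppose Q is an n×n symmetric positive definite matrix and α_1,…,α_m are positive reals such that (1) A Q + Q Aᵀ + Σᵢ α_i B_i B_iᵀ is negative definite, and (2) σ_i² C_i Q C_iᵀ < α_i for every i. Then A Q + Q Aᵀ + Σᵢ σ_i² B_i C_i Q C_iᵀ B_iᵀ is negative definite. -/

import Mathlib

/-!
Since `C_i Q C_iᵀ` is a `1 × 1` matrix, each term `B_i C_i Q C_iᵀ B_iᵀ` is the scalar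
`c_i = (C_i Q C_iᵀ)₀₀` times the positive semidefinite matrix `B_i B_iᵀ`. Condition (2) says
`σ_i² c_i ≤ α_i`, so replacing the weights `α_i` by `σ_i² c_i` adds the positive semidefinite
matrix `∑ (α_i - σ_i² c_i) B_i B_iᵀ` to the positive definite `-(A Q + Q Aᵀ + ∑ α_i B_i B_iᵀ)`.
-/

namespace Matrix

variable {m k ι R : Type*}

theorem mul_mul_eq_smul_mul_of_unique [CommSemiring R] [Fintype ι] [Unique ι]
    (B : Matrix m ι R) (M : Matrix ι ι R) (D : Matrix ι k R) :
    B * M * D = M default default • (B * D) := by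
  ext i j
  simp [mul_apply, mul_left_comm, mul_assoc]

theorem PosDef.neg_add_sum_smul_of_le [CommRing R] [PartialOrder R] [IsOrderedRing R]
    [StarRing R] [StarOrderedRing R] [Fintype m] [Fintype ι]
    {X : Matrix m m R} {P : ι → Matrix m m R} {a b : ι → R}
    (hP : ∀ i, (P i).PosSemidef) (hab : ∀ i, a i ≤ b i)
    (h : (-(X + ∑ i, b i • P i)).PosDef) : (-(X + ∑ i, a i • P i)).PosDef := by
  have hgap : -(X + ∑ i, a i • P i) = -(X + ∑ i, b i • P i) + ∑ i, (b i - a i) • P i := by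
    simp only [sub_smul, Finset.sum_sub_distrib]
    abel
  rw [hgap]
  exact h.add_posSemidef <| posSemidef_sum _ fun i _ => (hP i).smul (sub_nonneg.2 (hab i))

end Matrix

open Matrix

theorem splitting_forward_general
    (n m : ℕ) (A : Matrix (Fin n) (Fin n) ℝ)
    (B : Fin m → Matrix (Fin n) (Fin 1) ℝ) (C : Fin m → Matrix (Fin 1) (Fin n) ℝ)
    (σ : Fin m → ℝ)
    (Q : Matrix (Fin n) (Fin n) ℝ)
    (α : Fin m → ℝ)
    (h1 : (-(A * Q + Q * Aᵀ + ∑ i, α i • (B i * (B i)ᵀ))).PosDef)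
    (h2 : ∀ i, σ i ^ 2 * ((C i * Q * (C i)ᵀ) 0 0) < α i) :
    (-(A * Q + Q * Aᵀ + ∑ i, σ i ^ 2 • (B i * C i * Q * (C i)ᵀ * (B i)ᵀ))).PosDef := by
  have hrank_one : ∀ i, B i * C i * Q * (C i)ᵀ * (B i)ᵀ
      = (C i * Q * (C i)ᵀ) 0 0 • (B i * (B i)ᵀ) := fun i => by
    rw [show B i * C i * Q * (C i)ᵀ * (B i)ᵀ = B i * (C i * Q * (C i)ᵀ) * (B i)ᵀ by
      simp only [Matrix.mul_assoc]]
    exact mul_mul_eq_smul_mul_of_unique _ _ _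
  have hBB : ∀ i, (B i * (B i)ᵀ).PosSemidef := fun i => by
    simpa using posSemidef_self_mul_conjTranspose (B i)
  simp_rw [hrank_one, smul_smul]
  exact h1.neg_add_sum_smul_of_le hBB fun i => (h2 i).le

theorem splitting_forward
    (n m : ℕ) (A : Matrix (Fin n) (Fin n) ℝ)
    (B : Fin m → Matrix (Fin n) (Fin 1) ℝ) (C : Fin m → Matrix (Fin 1) (Fin n) ℝ)
    (σ : Fin m → ℝ) (hσ : ∀ i, 0 ≤ σ i)
    (Q : Matrix (Fin n) (Fin n) ℝ) (hQ : Q.PosDef)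
    (α : Fin m → ℝ) (hα : ∀ i, 0 < α i)
    (h1 : (-(A * Q + Q * Aᵀ + ∑ i, α i • (B i * (B i)ᵀ))).PosDef)
    (h2 : ∀ i, σ i ^ 2 * ((C i * Q * (C i)ᵀ) 0 0) < α i) :
    (-(A * Q + Q * Aᵀ + ∑ i, σ i ^ 2 • (B i * C i * Q * (C i)ᵀ * (B i)ᵀ))).PosDef :=
  splitting_forward_general n m A B C σ Q α h1 h2
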